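/- arXiv:0901.3290 — 3 statements merged into one kernel-verified Lean document; each statement's English description precedes it below -/
import Mathlib

section
/- Let p ≥ 2 and let ⟨A,B⟩ be a positive-definite inner product on the space of p×p real symmetric matrices. Suppose there exists σ² > 0 such that ⟨A,B⟩ = tr(AB)/σ² for all symmetric A, B with tr(A) = 0. Then there exists τ < 1/p such that ⟨A,B⟩ = [tr(AB) − τ·tr(A)·tr(B)]/σ² for all symmetric A, B. -/
open Matrix

/-!
Split every symmetric `A` as `A₀ + (tr A / p) • 1` with `A₀` trace free. Additivity and the
hypothesis on trace-free matrices give `f A B = tr (A₀ B) / σ² + (tr A / p) f 1 B`, and the same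
identity applied to `f 1 B = f B 1` gives `f 1 B = (tr B / p) f 1 1`. Together these are the
claimed formula with `τ = 1/p - σ² f 1 1 / p²`, and positivity of `f 1 1` forces `τ < 1/p`.
-/

namespace Matrix

variable {n K : Type*} [Fintype n] [DecidableEq n] [Field K]

def tracelessPart (A : Matrix n n K) : Matrix n n K :=
  A - (A.trace / Fintype.card n) • 1

theorem IsSymm.tracelessPart {A : Matrix n n K} (hA : A.IsSymm) : A.tracelessPart.IsSymm :=
  hA.sub (isSymm_one.smul _)

theorem tracelessPart_add_smul_one (A : Matrix n n K) :
    A.tracelessPart + (A.trace / Fintype.card n) • 1 = A :=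
  sub_add_cancel _ _

theorem trace_tracelessPart [Nonempty n] [CharZero K] (A : Matrix n n K) :
    A.tracelessPart.trace = 0 := by
  have hcard : (Fintype.card n : K) ≠ 0 := Nat.cast_ne_zero.2 Fintype.card_ne_zero
  simp only [tracelessPart, trace_sub, trace_smul, trace_one, smul_eq_mul,
    div_mul_cancel₀ _ hcard, sub_self]

theorem trace_tracelessPart_mul (A B : Matrix n n K) :
    (A.tracelessPart * B).trace = (A * B).trace - A.trace / Fintype.card n * B.trace := by
  simp only [tracelessPart, sub_mul, smul_mul, one_mul, trace_sub, trace_smul, smul_eq_mul]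

end Matrix

section SymmetricForm

variable {n : Type*} [Fintype n] [DecidableEq n] [Nonempty n]
  {f : Matrix n n ℝ → Matrix n n ℝ → ℝ} {σ2 : ℝ}

theorem apply_eq_trace_tracelessPart_mul_add
    (hadd : ∀ A A' B, A.IsSymm → A'.IsSymm → B.IsSymm → f (A + A') B = f A B + f A' B)
    (hsmul : ∀ (c : ℝ) A B, A.IsSymm → B.IsSymm → f (c • A) B = c * f A B)
    (htr : ∀ A B, A.IsSymm → B.IsSymm → A.trace = 0 → f A B = (A * B).trace / σ2)
    {A B : Matrix n n ℝ} (hA : A.IsSymm) (hB : B.IsSymm) :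
    f A B = (A.tracelessPart * B).trace / σ2 + A.trace / Fintype.card n * f 1 B := by
  conv_lhs => rw [← A.tracelessPart_add_smul_one]
  rw [hadd _ _ _ hA.tracelessPart (isSymm_one.smul _) hB, hsmul _ _ _ isSymm_one hB,
    htr _ _ hA.tracelessPart hB A.trace_tracelessPart]

theorem apply_one_left_eq
    (hsymm : ∀ A B, A.IsSymm → B.IsSymm → f A B = f B A)
    (hadd : ∀ A A' B, A.IsSymm → A'.IsSymm → B.IsSymm → f (A + A') B = f A B + f A' B)
    (hsmul : ∀ (c : ℝ) A B, A.IsSymm → B.IsSymm → f (c • A) B = c * f A B)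
    (htr : ∀ A B, A.IsSymm → B.IsSymm → A.trace = 0 → f A B = (A * B).trace / σ2)
    {B : Matrix n n ℝ} (hB : B.IsSymm) :
    f 1 B = B.trace / Fintype.card n * f 1 1 := by
  rw [hsymm _ _ isSymm_one hB, apply_eq_trace_tracelessPart_mul_add hadd hsmul htr hB isSymm_one,
    mul_one, B.trace_tracelessPart, zero_div, zero_add]

theorem apply_eq_trace_mul_sub_trace_mul_trace
    (hsymm : ∀ A B, A.IsSymm → B.IsSymm → f A B = f B A)
    (hadd : ∀ A A' B, A.IsSymm → A'.IsSymm → B.IsSymm → f (A + A') B = f A B + f A' B)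
    (hsmul : ∀ (c : ℝ) A B, A.IsSymm → B.IsSymm → f (c • A) B = c * f A B)
    (hσ : σ2 ≠ 0)
    (htr : ∀ A B, A.IsSymm → B.IsSymm → A.trace = 0 → f A B = (A * B).trace / σ2)
    {A B : Matrix n n ℝ} (hA : A.IsSymm) (hB : B.IsSymm) :
    f A B = ((A * B).trace - (1 / Fintype.card n - σ2 * f 1 1 / Fintype.card n ^ 2) *
      A.trace * B.trace) / σ2 := by
  rw [apply_eq_trace_tracelessPart_mul_add hadd hsmul htr hA hB,
    apply_one_left_eq hsymm hadd hsmul htr hB, trace_tracelessPart_mul]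
  field_simp
  ring

end SymmetricForm

/-- An inner product on the space of p×p real symmetric matrices that
agrees with `tr(AB)/σ²` on trace-free symmetric matrices must be of the orthogonally
invariant form `(tr(AB) − τ tr(A) tr(B))/σ²` for some `τ < 1/p`. -/
theorem stmt_0 (p : ℕ) (hp : 2 ≤ p)
    (f : Matrix (Fin p) (Fin p) ℝ → Matrix (Fin p) (Fin p) ℝ → ℝ)
    (hsymm : ∀ A B, A.IsSymm → B.IsSymm → f A B = f B A)
    (hadd : ∀ A A' B, A.IsSymm → A'.IsSymm → B.IsSymm → f (A + A') B = f A B + f A' B)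
    (hsmul : ∀ (c : ℝ) A B, A.IsSymm → B.IsSymm → f (c • A) B = c * f A B)
    (hpos : ∀ A, A.IsSymm → A ≠ 0 → 0 < f A A)
    (σ2 : ℝ) (hσ : 0 < σ2)
    (htr : ∀ A B, A.IsSymm → B.IsSymm → A.trace = 0 → f A B = (A * B).trace / σ2) :
    ∃ τ : ℝ, τ < 1 / p ∧ ∀ A B, A.IsSymm → B.IsSymm →
      f A B = ((A * B).trace - τ * A.trace * B.trace) / σ2 := by
  have : NeZero p := ⟨by omega⟩
  have hf11 : 0 < f 1 1 := hpos 1 isSymm_one one_ne_zero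
  refine ⟨1 / p - σ2 * f 1 1 / p ^ 2, ?_, fun A B hA hB => ?_⟩
  · have : 0 < σ2 * f 1 1 / p ^ 2 := by positivity
    linarith
  · simpa only [Fintype.card_fin] using
      apply_eq_trace_mul_sub_trace_mul_trace hsymm hadd hsmul hσ.ne' htr hA hB
end

section
/- Let Ȳ_1, Ȳ_2, M_1, M_2 be elements of a real inner product space with norm ‖·‖, n_1, n_2 > 0, n = n_1 + n_2, avg(X) = (n_1 X_1 + n_2 X_2)/n, Δ(X) = X_1 − X_2. Then n_1‖Ȳ_1 − M_1‖² + n_2‖Ȳ_2 − M_2‖² = n‖avg(Ȳ) − avg(M)‖² + (n_1 n_2/n)‖Δ(Ȳ) − Δ(M)‖², where avg and Δ are applied to the pairs (Ȳ_1,Ȳ_2) and (M_1,M_2). -/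
theorem norm_smul_add_smul_sq_add_mul_norm_sub_sq {E : Type*} [NormedAddCommGroup E]
    [InnerProductSpace ℝ E] (n1 n2 : ℝ) (a b : E) :
    ‖n1 • a + n2 • b‖ ^ 2 + n1 * n2 * ‖a - b‖ ^ 2
      = (n1 + n2) * (n1 * ‖a‖ ^ 2 + n2 * ‖b‖ ^ 2) := by
  rw [norm_add_sq_real, norm_sub_sq_real, norm_smul, norm_smul, real_inner_smul_left,
    real_inner_smul_right, mul_pow, mul_pow, Real.norm_eq_abs, Real.norm_eq_abs, sq_abs,
    sq_abs]
  ring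

theorem mul_norm_sq_add_mul_norm_sq_eq_weighted_mean_add {E : Type*} [NormedAddCommGroup E]
    [InnerProductSpace ℝ E] {n1 n2 : ℝ} (hn : n1 + n2 ≠ 0) (a b : E) :
    n1 * ‖a‖ ^ 2 + n2 * ‖b‖ ^ 2
      = (n1 + n2) * ‖(n1 + n2)⁻¹ • (n1 • a + n2 • b)‖ ^ 2
        + n1 * n2 / (n1 + n2) * ‖a - b‖ ^ 2 := by
  have key := norm_smul_add_smul_sq_add_mul_norm_sub_sq n1 n2 a b
  rw [norm_smul, mul_pow, norm_inv, Real.norm_eq_abs, inv_pow, sq_abs]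
  field_simp
  linear_combination -key

/-- two-sample squared-norm decomposition
n₁‖Ȳ₁−M₁‖² + n₂‖Ȳ₂−M₂‖² = n‖avg Ȳ − avg M‖² + (n₁n₂/n)‖ΔȲ − ΔM‖². -/
theorem stmt_15 {E : Type*} [NormedAddCommGroup E] [InnerProductSpace ℝ E]
    (n1 n2 : ℝ) (hn1 : 0 < n1) (hn2 : 0 < n2)
    (Y1 Y2 M1 M2 : E) :
    n1 * ‖Y1 - M1‖ ^ 2 + n2 * ‖Y2 - M2‖ ^ 2
      = (n1 + n2) * ‖(n1 + n2)⁻¹ • (n1 • Y1 + n2 • Y2)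
            - (n1 + n2)⁻¹ • (n1 • M1 + n2 • M2)‖ ^ 2
        + (n1 * n2 / (n1 + n2)) * ‖(Y1 - Y2) - (M1 - M2)‖ ^ 2 := by
  have hmean : (n1 + n2)⁻¹ • (n1 • Y1 + n2 • Y2) - (n1 + n2)⁻¹ • (n1 • M1 + n2 • M2)
      = (n1 + n2)⁻¹ • (n1 • (Y1 - M1) + n2 • (Y2 - M2)) := by
    module
  have hdiff : (Y1 - Y2) - (M1 - M2) = (Y1 - M1) - (Y2 - M2) := by abel
  rw [hmean, hdiff]
  exact mul_norm_sq_add_mul_norm_sq_eq_weighted_mean_add (by positivity) _ _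
end

section
/- Let S be a p×p real symmetric matrix with eigenvalues λ_1 ≥ … ≥ λ_p and let the block average blk(λ) replace each λ_i in block j (of size m_j, blocks consecutive) by the average of the λ's in that block. Then tr((S − V·diag(blk(λ))·Vᵀ)²) = Σ_{i=1}^p (λ_i − blk(λ)_i)² for any orthogonal V with S = V·diag(λ)·Vᵀ, and this value equals the minimum of tr((S − M)²) over all symmetric M having exactly k distinct eigenvalues with multiplicities m_1, …, m_k arranged in decreasing order. -/
/-!
Write `S = V diag(λ) Vᵀ` and `M = U diag(μ) Uᵀ` with `λ`, `μ` decreasing. With `W = Vᵀ U`,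
`tr(S M) = λ ⬝ (W∘W) μ`, and the matrix of squared entries `W∘W` is doubly stochastic; by
Birkhoff it is a convex combination of permutation matrices, so the rearrangement inequality gives
von Neumann's bound `tr(S M) ≤ λ ⬝ μ`, i.e. `tr((S - M)²) ≥ ‖λ - μ‖²`. When `μ` is constant on the
blocks, `‖λ - μ‖²` is minimised blockwise by the block means. The block means themselves are only
weakly decreasing, but subtracting `ε j` on block `j` makes them strictly decreasing at a cost that
tends to `0` with `ε`, so the bound is the greatest lower bound.
-/

open Matrix Finset Filter Topology

namespace Matrix

variable {n : Type*} [Fintype n] [DecidableEq n]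

lemma of_sq_mem_doublyStochastic_of_mem_orthogonalGroup {W : Matrix n n ℝ}
    (hW : W ∈ orthogonalGroup n ℝ) : of (fun i j => W i j ^ 2) ∈ doublyStochastic ℝ n := by
  have hrow := congrFun₂ ((mem_orthogonalGroup_iff _ _).1 hW)
  have hcol := congrFun₂ ((mem_orthogonalGroup_iff' _ _).1 hW)
  refine mem_doublyStochastic_iff_sum.2 ⟨fun i j => sq_nonneg _, fun i => ?_, fun j => ?_⟩
  · simpa [mul_apply, sq] using hrow i i
  · simpa [mul_apply, sq] using hcol j j

lemma dotProduct_mulVec_le_of_mem_doublyStochastic {f g : n → ℝ} (hfg : Monovary f g)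
    {Q : Matrix n n ℝ} (hQ : Q ∈ doublyStochastic ℝ n) : f ⬝ᵥ (Q *ᵥ g) ≤ f ⬝ᵥ g := by
  rw [← SetLike.mem_coe, doublyStochastic_eq_convexHull_permMatrix] at hQ
  refine convexHull_min ?_
    (convex_halfSpace_le (f := fun P : Matrix n n ℝ => f ⬝ᵥ (P *ᵥ g)) ?_ _) hQ
  · rintro _ ⟨σ, rfl⟩
    simpa [permMatrix_mulVec, dotProduct] using hfg.sum_mul_comp_perm_le_sum_mul
  · exact ⟨fun P Q => by simp [add_mulVec, dotProduct_add],
      fun r Q => by simp [smul_mulVec, dotProduct_smul]⟩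

lemma trace_conj_diagonal_mul_conj_diagonal (V U : Matrix n n ℝ) (a c : n → ℝ) :
    trace ((V * diagonal a * Vᵀ) * (U * diagonal c * Uᵀ))
      = a ⬝ᵥ (of (fun i j => (Vᵀ * U) i j ^ 2) *ᵥ c) := by
  set W := Vᵀ * U
  have hcycle : trace ((V * diagonal a * Vᵀ) * (U * diagonal c * Uᵀ))
      = trace (diagonal a * W * diagonal c * Wᵀ) := by
    rw [transpose_mul, transpose_transpose, show V * diagonal a * Vᵀ * (U * diagonal c * Uᵀ)
      = V * (diagonal a * Vᵀ * U * diagonal c * Uᵀ) by simp only [Matrix.mul_assoc], trace_mul_comm]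
    simp only [W, Matrix.mul_assoc]
  rw [hcycle]
  simp only [trace, Matrix.diag, mul_apply (N := Wᵀ), mul_diagonal, diagonal_mul, transpose_apply,
    dotProduct, mulVec, of_apply, mul_sum]
  exact sum_congr rfl fun i _ => sum_congr rfl fun j _ => by ring

theorem trace_conj_diagonal_mul_conj_diagonal_le {V U : Matrix n n ℝ}
    (hV : V ∈ orthogonalGroup n ℝ) (hU : U ∈ orthogonalGroup n ℝ) {a c : n → ℝ}
    (hac : Monovary a c) :
    trace ((V * diagonal a * Vᵀ) * (U * diagonal c * Uᵀ)) ≤ a ⬝ᵥ c := by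
  have hVU : Vᵀ * U ∈ orthogonalGroup n ℝ :=
    mul_mem (transpose_mem_unitaryGroup_iff.2 hV) hU
  rw [trace_conj_diagonal_mul_conj_diagonal]
  exact dotProduct_mulVec_le_of_mem_doublyStochastic hac
    (of_sq_mem_doublyStochastic_of_mem_orthogonalGroup hVU)

lemma trace_conj_diagonal_mul_self {V : Matrix n n ℝ} (hV : V ∈ orthogonalGroup n ℝ)
    (a : n → ℝ) : trace ((V * diagonal a * Vᵀ) * (V * diagonal a * Vᵀ)) = ∑ i, a i ^ 2 := by
  have hsq : of (fun i j => (1 : Matrix n n ℝ) i j ^ 2) = 1 := by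
    ext i j
    by_cases h : i = j <;> simp [h, one_apply]
  rw [trace_conj_diagonal_mul_conj_diagonal, (mem_orthogonalGroup_iff' _ _).1 hV, hsq,
    one_mulVec]
  simp only [dotProduct, sq]

theorem sum_sq_sub_le_trace_sq_sub_conj_diagonal {V U : Matrix n n ℝ}
    (hV : V ∈ orthogonalGroup n ℝ) (hU : U ∈ orthogonalGroup n ℝ) {a c : n → ℝ}
    (hac : Monovary a c) :
    ∑ i, (a i - c i) ^ 2 ≤ trace ((V * diagonal a * Vᵀ - U * diagonal c * Uᵀ)
      * (V * diagonal a * Vᵀ - U * diagonal c * Uᵀ)) := by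
  set A := V * diagonal a * Vᵀ
  set B := U * diagonal c * Uᵀ
  have hexpand :
      trace ((A - B) * (A - B)) = trace (A * A) + trace (B * B) - 2 * trace (A * B) := by
    rw [sub_mul, mul_sub, mul_sub, trace_sub, trace_sub, trace_sub, trace_mul_comm B A]
    ring
  have hsum : ∑ i, (a i - c i) ^ 2 = ∑ i, a i ^ 2 + ∑ i, c i ^ 2 - 2 * (a ⬝ᵥ c) := by
    simp only [dotProduct, sub_sq, sum_sub_distrib, sum_add_distrib, mul_sum, mul_assoc]
    ring
  rw [hexpand, hsum, trace_conj_diagonal_mul_self hV, trace_conj_diagonal_mul_self hU]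
  linarith [trace_conj_diagonal_mul_conj_diagonal_le hV hU hac]

lemma trace_sq_sub_conj_diagonal {V : Matrix n n ℝ} (hV : V ∈ orthogonalGroup n ℝ)
    (a c : n → ℝ) :
    trace ((V * diagonal a * Vᵀ - V * diagonal c * Vᵀ)
      * (V * diagonal a * Vᵀ - V * diagonal c * Vᵀ)) = ∑ i, (a i - c i) ^ 2 := by
  have hsub : V * diagonal a * Vᵀ - V * diagonal c * Vᵀ = V * diagonal (a - c) * Vᵀ := by
    rw [← sub_mul, ← mul_sub, diagonal_sub]
    rfl
  rw [hsub, trace_conj_diagonal_mul_self hV]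
  rfl

end Matrix

lemma Finset.sum_sq_sub_mean_le {ι : Type*} (s : Finset ι) (f : ι → ℝ) (c : ℝ) :
    ∑ i ∈ s, (f i - (∑ j ∈ s, f j) / #s) ^ 2 ≤ ∑ i ∈ s, (f i - c) ^ 2 := by
  rcases s.eq_empty_or_nonempty with rfl | hs
  · simp
  set m := (∑ j ∈ s, f j) / #s
  have hm : ∑ j ∈ s, f j = #s * m := by
    rw [mul_div_cancel₀]; exact_mod_cast hs.card_pos.ne'
  have hsplit : ∑ i ∈ s, (f i - c) ^ 2 = ∑ i ∈ s, (f i - m) ^ 2 + #s * (m - c) ^ 2 := by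
    have (i : ι) : (f i - c) ^ 2 = (f i - m) ^ 2 + (2 * (m - c) * f i - (m - c) * (m + c)) := by
      ring
    rw [sum_congr rfl fun i _ => this i, sum_add_distrib, sum_sub_distrib, ← mul_sum, hm,
      sum_const, nsmul_eq_mul]
    ring
  rw [hsplit]
  exact le_add_of_nonneg_right (mul_nonneg (Nat.cast_nonneg _) (sq_nonneg _))

section BlockMean

variable {ι κ : Type*} [Fintype ι] [DecidableEq κ]

noncomputable def blockMean (b : ι → κ) (f : ι → ℝ) (j : κ) : ℝ :=
  (∑ i ∈ univ.filter (fun i => b i = j), f i) / #(univ.filter (fun i => b i = j))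

lemma sum_sq_sub_blockMean_le [Fintype κ] (b : ι → κ) (f : ι → ℝ) (d : κ → ℝ) :
    ∑ i, (f i - blockMean b f (b i)) ^ 2 ≤ ∑ i, (f i - d (b i)) ^ 2 := by
  rw [← sum_fiberwise univ b, ← sum_fiberwise univ b]
  refine sum_le_sum fun j _ => ?_
  calc ∑ i ∈ univ.filter (fun i => b i = j), (f i - blockMean b f (b i)) ^ 2
      = ∑ i ∈ univ.filter (fun i => b i = j), (f i - blockMean b f j) ^ 2 :=
        sum_congr rfl fun i hi => by rw [(mem_filter.1 hi).2]
    _ ≤ ∑ i ∈ univ.filter (fun i => b i = j), (f i - d j) ^ 2 := sum_sq_sub_mean_le _ f (d j)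
    _ = ∑ i ∈ univ.filter (fun i => b i = j), (f i - d (b i)) ^ 2 :=
        sum_congr rfl fun i hi => by rw [(mem_filter.1 hi).2]

lemma blockMean_antitone [LinearOrder ι] [PartialOrder κ] {b : ι → κ} (hb : Monotone b)
    (hbsurj : Function.Surjective b) {f : ι → ℝ} (hf : Antitone f) : Antitone (blockMean b f) := by
  intro j₁ j₂ hj
  rcases hj.eq_or_lt with rfl | hj
  · exact le_rfl
  set F₁ := univ.filter (fun i => b i = j₁)
  set F₂ := univ.filter (fun i => b i = j₂)
  have hF₁ : (0 : ℝ) < #F₁ := by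
    obtain ⟨i, hi⟩ := hbsurj j₁
    exact_mod_cast card_pos.2 ⟨i, by simp [F₁, hi]⟩
  have hF₂ : (0 : ℝ) < #F₂ := by
    obtain ⟨i, hi⟩ := hbsurj j₂
    exact_mod_cast card_pos.2 ⟨i, by simp [F₂, hi]⟩
  have hle : ∀ i₁ ∈ F₁, ∀ i₂ ∈ F₂, f i₂ ≤ f i₁ := by
    intro i₁ hi₁ i₂ hi₂
    refine hf (le_of_not_gt fun h => ?_)
    have := hb h.le
    rw [(mem_filter.1 hi₁).2, (mem_filter.1 hi₂).2] at this
    exact this.not_gt hj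
  rw [blockMean, blockMean, div_le_div_iff₀ hF₂ hF₁]
  calc (∑ i ∈ F₂, f i) * #F₁ = ∑ i₁ ∈ F₁, ∑ i₂ ∈ F₂, f i₂ := by
        rw [sum_const, nsmul_eq_mul, mul_comm]
    _ ≤ ∑ i₁ ∈ F₁, ∑ i₂ ∈ F₂, f i₁ := sum_le_sum fun i₁ hi₁ => sum_le_sum (hle i₁ hi₁)
    _ = (∑ i ∈ F₁, f i) * #F₂ := by simp only [sum_const, nsmul_eq_mul, ← sum_mul, mul_comm]

end BlockMean

theorem stmt_19_general (p k : ℕ) (S V : Matrix (Fin p) (Fin p) ℝ)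
    (lam : Fin p → ℝ) (hlam : Antitone lam)
    (hV : Vᵀ * V = 1)
    (hS : S = V * Matrix.diagonal lam * Vᵀ)
    (b : Fin p → Fin k) (hb : Monotone b) (hbsurj : Function.Surjective b)
    (blk : Fin p → ℝ)
    (hblk : ∀ i, blk i =
      (∑ j ∈ univ.filter (fun j => b j = b i), lam j)
        / (univ.filter (fun j => b j = b i)).card) :
    (((S - V * Matrix.diagonal blk * Vᵀ) * (S - V * Matrix.diagonal blk * Vᵀ)).trace
        = ∑ i, (lam i - blk i) ^ 2)
    ∧ IsGLB {x : ℝ | ∃ (U : Matrix (Fin p) (Fin p) ℝ) (dt : Fin k → ℝ),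
          Uᵀ * U = 1 ∧ U * Uᵀ = 1 ∧ StrictAnti dt ∧
          x = ((S - U * Matrix.diagonal (fun i => dt (b i)) * Uᵀ)
                * (S - U * Matrix.diagonal (fun i => dt (b i)) * Uᵀ)).trace}
        (∑ i, (lam i - blk i) ^ 2) := by
  have hVo : V ∈ orthogonalGroup (Fin p) ℝ := (mem_orthogonalGroup_iff' _ _).2 hV
  obtain rfl : blk = fun i => blockMean b lam (b i) := funext hblk
  have hdist (μ : Fin p → ℝ) : ((S - V * diagonal μ * Vᵀ) * (S - V * diagonal μ * Vᵀ)).trace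
      = ∑ i, (lam i - μ i) ^ 2 := by
    rw [hS, trace_sq_sub_conj_diagonal hVo]
  refine ⟨hdist _, isGLB_of_mem_closure ?_ ?_⟩
  · rintro _ ⟨U, dt, hU, -, hdt, rfl⟩
    have hUo : U ∈ orthogonalGroup (Fin p) ℝ := (mem_orthogonalGroup_iff' _ _).2 hU
    rw [hS]
    exact (sum_sq_sub_blockMean_le b lam dt).trans (sum_sq_sub_le_trace_sq_sub_conj_diagonal hVo
      hUo (hlam.monovary (hdt.antitone.comp_monotone hb)))
  · set g : ℝ → ℝ := fun ε => ∑ i, (lam i - (blockMean b lam (b i) - ε * (b i : ℕ))) ^ 2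
    have hg : Tendsto g (𝓝[>] 0) (𝓝 (∑ i, (lam i - blockMean b lam (b i)) ^ 2)) :=
      ((by fun_prop : Continuous g).tendsto' 0 _ (by simp [g])).mono_left nhdsWithin_le_nhds
    refine mem_closure_of_tendsto hg (eventually_mem_nhdsWithin.mono fun ε (hε : 0 < ε) => ?_)
    refine ⟨V, fun j => blockMean b lam j - ε * (j : ℕ), hV, (mem_orthogonalGroup_iff _ _).1 hVo,
      fun j₁ j₂ hj => ?_, ?_⟩
    · have hmean := blockMean_antitone hb hbsurj hlam hj.le
      have hshift : ε * (j₁ : ℕ) < ε * (j₂ : ℕ) :=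
        mul_lt_mul_of_pos_left (by exact_mod_cast hj) hε
      linarith
    · rw [hdist]

/-- for a symmetric S with decreasing eigenvalues λ and block
structure given by the fibers of a monotone surjection `b : Fin p → Fin k`
(consecutive blocks of sizes m₁,…,m_k), the matrix obtained by replacing the
eigenvalues by their block averages blk(λ) satisfies
tr((S − V·diag(blk λ)·Vᵀ)²) = Σᵢ (λᵢ − blk(λ)ᵢ)², and this value is the greatest
lower bound (the minimum) of tr((S − M)²) over all symmetric M having exactly k
distinct eigenvalues of multiplicities m₁,…,m_k in decreasing order. -/
theorem stmt_19 (p k : ℕ) (S V : Matrix (Fin p) (Fin p) ℝ)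
    (lam : Fin p → ℝ) (hlam : Antitone lam)
    (hV : Vᵀ * V = 1) (hV' : V * Vᵀ = 1)
    (hS : S = V * Matrix.diagonal lam * Vᵀ)
    (b : Fin p → Fin k) (hb : Monotone b) (hbsurj : Function.Surjective b)
    (blk : Fin p → ℝ)
    (hblk : ∀ i, blk i =
      (∑ j ∈ univ.filter (fun j => b j = b i), lam j)
        / (univ.filter (fun j => b j = b i)).card) :
    (((S - V * Matrix.diagonal blk * Vᵀ) * (S - V * Matrix.diagonal blk * Vᵀ)).trace
        = ∑ i, (lam i - blk i) ^ 2)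
    ∧ IsGLB {x : ℝ | ∃ (U : Matrix (Fin p) (Fin p) ℝ) (dt : Fin k → ℝ),
          Uᵀ * U = 1 ∧ U * Uᵀ = 1 ∧ StrictAnti dt ∧
          x = ((S - U * Matrix.diagonal (fun i => dt (b i)) * Uᵀ)
                * (S - U * Matrix.diagonal (fun i => dt (b i)) * Uᵀ)).trace}
        (∑ i, (lam i - blk i) ^ 2) :=
  stmt_19_general p k S V lam hlam hV hS b hb hbsurj blk hblk
end
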